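/- arXiv:2212.06003 — 2 statements merged into one kernel-verified Lean document; each statement's English description precedes it below -/
import Mathlib

section
/- Let H be a Hilbert space, ν a σ-finite measure, and suppose H' is a closed linear subspace of L²(ν) that is invariant under multiplication by 1_E for every E in a π-system generating the σ-algebra of ν (and hence under multiplication by all of L^∞(ν)). Then there exists a measurable set E₀ with H' = {f ∈ L²(ν) : f = 0 a.e. on the complement of E₀} = L²(1_{E₀}·ν). -/
open MeasureTheory
open Filter Set ENNReal Topology

open MeasureTheory Filter Set ENNReal Topology

section helpers
variable {α : Type*} [m : MeasurableSpace α] {ν : Measure α}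

lemma aux_tendsto_L2 (g : ℕ → Lp ℝ 2 ν) (G : Lp ℝ 2 ν) (bound : α → ℝ)
    (hbound : MemLp bound 2 ν)
    (hb : ∀ n, ∀ᵐ a ∂ν, ‖(g n : α → ℝ) a‖ ≤ bound a)
    (hlim : ∀ᵐ a ∂ν, Tendsto (fun n => (g n : α → ℝ) a) atTop (𝓝 ((G : α → ℝ) a))) :
    Tendsto g atTop (𝓝 G) := by
  rw [Lp.tendsto_Lp_iff_tendsto_eLpNorm']
  have hGb : ∀ᵐ a ∂ν, ‖(G : α → ℝ) a‖ ≤ bound a := by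
    have h' : ∀ᵐ a ∂ν, ∀ n, ‖(g n : α → ℝ) a‖ ≤ bound a := ae_all_iff.mpr hb
    filter_upwards [h', hlim] with a ha hl
    exact le_of_tendsto hl.norm (Eventually.of_forall ha)
  have key : Tendsto (fun n => ∫⁻ a, (‖(g n : α → ℝ) a - (G : α → ℝ) a‖₊ : ℝ≥0∞) ^ (2:ℝ) ∂ν)
      atTop (𝓝 0) := by
    have h0 := tendsto_lintegral_of_dominated_convergence'
      (F := fun n a => (‖(g n : α → ℝ) a - (G : α → ℝ) a‖₊ : ℝ≥0∞) ^ (2:ℝ))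
      (f := fun _ => (0:ℝ≥0∞)) (μ := ν)
      (fun a => (‖2 * bound a‖₊ : ℝ≥0∞) ^ (2:ℝ)) ?_ ?_ ?_ ?_
    · simpa using h0
    · intro n
      exact ((((Lp.aestronglyMeasurable (g n)).sub
        (Lp.aestronglyMeasurable G)).aemeasurable).nnnorm.coe_nnreal_ennreal).pow_const _
    · intro n
      filter_upwards [hb n, hGb] with a h1 h2
      refine ENNReal.rpow_le_rpow ?_ (by norm_num)
      rw [ENNReal.coe_le_coe, ← NNReal.coe_le_coe, coe_nnnorm, coe_nnnorm]
      calc ‖(g n : α → ℝ) a - (G : α → ℝ) a‖ ≤ ‖(g n : α → ℝ) a‖ + ‖(G : α → ℝ) a‖ :=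
            norm_sub_le _ _
        _ ≤ bound a + bound a := add_le_add h1 h2
        _ ≤ ‖2 * bound a‖ := by rw [two_mul]; exact le_abs_self _
    · have h2 : MemLp (fun a => 2 * bound a) 2 ν := hbound.const_mul 2
      have := lintegral_rpow_enorm_lt_top_of_eLpNorm_lt_top (two_ne_zero)
        (ENNReal.ofNat_ne_top) h2.2
      simpa [enorm_eq_nnnorm] using this.ne
    · filter_upwards [hlim] with a ha
      have h1 : Tendsto (fun n => (g n : α → ℝ) a - (G : α → ℝ) a) atTop (𝓝 0) := by
        simpa using ha.sub (tendsto_const_nhds (x := (G : α → ℝ) a))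
      have h2 : Tendsto (fun n => (‖(g n : α → ℝ) a - (G : α → ℝ) a‖₊ : ℝ≥0∞)) atTop (𝓝 0) := by
        rw [← ENNReal.coe_zero]
        exact ENNReal.tendsto_coe.mpr (by simpa using h1.nnnorm)
      simpa [ENNReal.zero_rpow_of_pos] using h2.ennrpow_const 2
  have heq : ∀ n, eLpNorm ((g n : α → ℝ) - (G : α → ℝ)) 2 ν
      = (∫⁻ a, (‖(g n : α → ℝ) a - (G : α → ℝ) a‖₊ : ℝ≥0∞) ^ (2:ℝ) ∂ν) ^ (1/(2:ℝ)) := by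
    intro n
    rw [eLpNorm_eq_lintegral_rpow_enorm_toReal (two_ne_zero) (ENNReal.ofNat_ne_top)]
    simp [Pi.sub_apply, enorm_eq_nnnorm]
  simp_rw [heq]
  have := key.ennrpow_const (1/(2:ℝ))
  simpa [ENNReal.zero_rpow_of_pos] using this

/-- `H` is stable under a.e.-multiplication by `b`. -/
def MulStab (ν : Measure α) (H : Submodule ℝ (Lp ℝ 2 ν)) (b : α → ℝ) : Prop :=
  ∀ f ∈ H, ∃ g ∈ H, (g : α → ℝ) =ᵐ[ν] fun a => b a * (f : α → ℝ) a

lemma indicator_union_step {E : ℕ → Set α} (hd : Pairwise (Function.onFun Disjoint E)) (n : ℕ) (a : α) :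
    (⋃ i ∈ Finset.range (n+1), E i).indicator (fun _ => (1:ℝ)) a
      = (⋃ i ∈ Finset.range n, E i).indicator (fun _ => (1:ℝ)) a
        + (E n).indicator (fun _ => (1:ℝ)) a := by
  by_cases h : a ∈ E n
  · have h2 : a ∉ ⋃ i ∈ Finset.range n, E i := by
      simp only [Set.mem_iUnion, Finset.mem_range, not_exists]
      intro i hi hai
      exact Set.disjoint_left.mp (hd (Nat.ne_of_lt hi)) hai h
    have h3 : a ∈ ⋃ i ∈ Finset.range (n+1), E i := by
      simp only [Set.mem_iUnion, Finset.mem_range]; exact ⟨n, Nat.lt_succ_self n, h⟩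
    rw [Set.indicator_of_mem h3, Set.indicator_of_notMem h2, Set.indicator_of_mem h]
    norm_num
  · by_cases h2 : a ∈ ⋃ i ∈ Finset.range n, E i
    · have h3 : a ∈ ⋃ i ∈ Finset.range (n+1), E i := by
        simp only [Set.mem_iUnion, Finset.mem_range] at h2 ⊢
        obtain ⟨i, hi, hai⟩ := h2; exact ⟨i, hi.trans (Nat.lt_succ_self n), hai⟩
      rw [Set.indicator_of_mem h3, Set.indicator_of_mem h2, Set.indicator_of_notMem h]
      norm_num
    · have h3 : a ∉ ⋃ i ∈ Finset.range (n+1), E i := by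
        simp only [Set.mem_iUnion, Finset.mem_range, not_exists] at h2 ⊢
        intro i hi
        rcases Nat.lt_succ_iff_lt_or_eq.mp hi with hi' | rfl
        · exact h2 i hi'
        · exact h
      rw [Set.indicator_of_notMem h3, Set.indicator_of_notMem h2, Set.indicator_of_notMem h]
      norm_num

lemma mulStab_indicator {C : Set (Set α)} (hpi : IsPiSystem C)
    (hgen : m = MeasurableSpace.generateFrom C)
    {H : Submodule ℝ (Lp ℝ 2 ν)} (hclosed : IsClosed (H : Set (Lp ℝ 2 ν)))
    (hC : ∀ E ∈ C, MulStab ν H (E.indicator fun _ => (1:ℝ))) :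
    ∀ E, MeasurableSet E → MulStab ν H (E.indicator fun _ => (1:ℝ)) := by
  refine MeasurableSpace.induction_on_inter hgen hpi ?_ hC ?_ ?_
  · intro f hf
    exact ⟨0, H.zero_mem, by
      filter_upwards [Lp.coeFn_zero ℝ 2 ν] with a h
      rw [h]; simp⟩
  · intro t _ ht f hf
    obtain ⟨g, hg, hge⟩ := ht f hf
    refine ⟨f - g, H.sub_mem hf hg, ?_⟩
    filter_upwards [hge, Lp.coeFn_sub f g] with a h1 h2
    rw [h2, Pi.sub_apply, h1]
    by_cases hmem : a ∈ t
    · rw [Set.indicator_of_mem hmem, Set.indicator_of_notMem (Set.notMem_compl_iff.mpr hmem)]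
      ring
    · rw [Set.indicator_of_notMem hmem, Set.indicator_of_mem (Set.mem_compl hmem)]
      ring
  · intro E hEdisj hEmeas hEstab f hf
    have step : ∀ n : ℕ, ∃ g ∈ H, (g : α → ℝ) =ᵐ[ν]
        fun a => (⋃ i ∈ Finset.range n, E i).indicator (fun _ => (1:ℝ)) a * (f : α → ℝ) a := by
      intro n
      induction n with
      | zero =>
        exact ⟨0, H.zero_mem, by
          filter_upwards [Lp.coeFn_zero ℝ 2 ν] with a h
          rw [h]; simp⟩
      | succ n ih =>
        obtain ⟨g, hg, hge⟩ := ih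
        obtain ⟨g', hg', hge'⟩ := hEstab n f hf
        refine ⟨g + g', H.add_mem hg hg', ?_⟩
        filter_upwards [hge, hge', Lp.coeFn_add g g'] with a h1 h2 h3
        rw [h3, Pi.add_apply, h1, h2, indicator_union_step hEdisj n a, add_mul]
    choose g hgH hge using step
    set u : α → ℝ := fun a => (⋃ i, E i).indicator (fun _ => (1:ℝ)) a * (f : α → ℝ) a with hu
    have huind : u = (⋃ i, E i).indicator (f : α → ℝ) := by
      funext a
      by_cases hmem : a ∈ ⋃ i, E i
      · simp [hu, Set.indicator_of_mem hmem]
      · simp [hu, Set.indicator_of_notMem hmem]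
    have humem : MemLp u 2 ν := by
      rw [huind]; exact (Lp.memLp f).indicator (MeasurableSet.iUnion hEmeas)
    have hblem : ∀ n, ∀ᵐ a ∂ν, ‖(g n : α → ℝ) a‖ ≤ ‖(f : α → ℝ) a‖ := by
      intro n
      filter_upwards [hge n] with a h1
      rw [h1]
      by_cases hmem : a ∈ ⋃ i ∈ Finset.range n, E i
      · rw [Set.indicator_of_mem hmem]; simp
      · rw [Set.indicator_of_notMem hmem]; simp
    have htends : Tendsto g atTop (𝓝 (humem.toLp u)) := by
      refine aux_tendsto_L2 g _ (fun a => ‖(f : α → ℝ) a‖) (Lp.memLp f).norm hblem ?_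
      have hall : ∀ᵐ a ∂ν, ∀ n, (g n : α → ℝ) a
          = (⋃ i ∈ Finset.range n, E i).indicator (fun _ => (1:ℝ)) a * (f : α → ℝ) a :=
        ae_all_iff.mpr hge
      filter_upwards [hall, humem.coeFn_toLp] with a ha hta
      rw [hta]
      by_cases hmem : a ∈ ⋃ i, E i
      · obtain ⟨i₀, hi₀⟩ := Set.mem_iUnion.mp hmem
        refine tendsto_atTop_of_eventually_const (i₀ := i₀ + 1) fun n hn => ?_
        rw [ha n]
        have hmem2 : a ∈ ⋃ i ∈ Finset.range n, E i := by
          simp only [Set.mem_iUnion, Finset.mem_range]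
          exact ⟨i₀, lt_of_lt_of_le (Nat.lt_succ_self i₀) hn, hi₀⟩
        show _ = u a
        rw [hu]
        dsimp only
        rw [Set.indicator_of_mem hmem2, Set.indicator_of_mem hmem]
      · refine tendsto_atTop_of_eventually_const (i₀ := 0) fun n _ => ?_
        rw [ha n]
        have hmem2 : a ∉ ⋃ i ∈ Finset.range n, E i := by
          intro hc
          exact hmem (by
            simp only [Set.mem_iUnion, Finset.mem_range] at hc
            obtain ⟨i, _, hai⟩ := hc
            exact Set.mem_iUnion.mpr ⟨i, hai⟩)
        show _ = u a
        rw [hu]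
        dsimp only
        rw [Set.indicator_of_notMem hmem2, Set.indicator_of_notMem hmem]
    refine ⟨humem.toLp u, ?_, humem.coeFn_toLp⟩
    exact hclosed.mem_of_tendsto htends (Eventually.of_forall hgH)

lemma mulStab_simple {H : Submodule ℝ (Lp ℝ 2 ν)}
    (hind : ∀ E, MeasurableSet E → MulStab ν H (E.indicator fun _ => (1:ℝ)))
    (s : SimpleFunc α ℝ) : MulStab ν H ⇑s := by
  induction s using SimpleFunc.induction with
  | @const c t hs =>
    intro f hf
    obtain ⟨g, hg, hge⟩ := hind t hs f hf
    refine ⟨c • g, H.smul_mem c hg, ?_⟩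
    filter_upwards [hge, Lp.coeFn_smul c g] with a h1 h2
    rw [h2, Pi.smul_apply, smul_eq_mul, h1]
    by_cases hmem : a ∈ t
    · rw [Set.indicator_of_mem hmem]
      simp [SimpleFunc.piecewise_apply, hmem]
    · rw [Set.indicator_of_notMem hmem]
      simp [SimpleFunc.piecewise_apply, hmem]
  | @add p q hdisj hp hq =>
    intro f hf
    obtain ⟨g, hg, hge⟩ := hp f hf
    obtain ⟨g', hg', hge'⟩ := hq f hf
    refine ⟨g + g', H.add_mem hg hg', ?_⟩
    filter_upwards [hge, hge', Lp.coeFn_add g g'] with a h1 h2 h3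
    rw [h3, Pi.add_apply, h1, h2]
    simp [add_mul]

end helpers

/-- A closed linear subspace of `L²(ν)` (`ν` σ-finite) invariant under
multiplication by indicators of the sets of a generating π-system equals
`L²(1_{E₀}·ν)` for some measurable set `E₀`, i.e. it consists exactly of those
`f` vanishing a.e. on the complement of `E₀`. -/
theorem stmt_17 {α : Type*} [m : MeasurableSpace α] (ν : Measure α)
    [SigmaFinite ν] (C : Set (Set α)) (hpi : IsPiSystem C)
    (hgen : m = MeasurableSpace.generateFrom C)
    (H : Submodule ℝ (Lp ℝ 2 ν)) (hclosed : IsClosed (H : Set (Lp ℝ 2 ν)))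
    (hinv : ∀ E ∈ C, ∀ f ∈ H, ∃ g ∈ H,
      (g : α → ℝ) =ᵐ[ν] fun a => E.indicator (fun _ => (1 : ℝ)) a * f a) :
    ∃ E₀ : Set α, MeasurableSet E₀ ∧
      ∀ f : Lp ℝ 2 ν, f ∈ H ↔ (f : α → ℝ) =ᵐ[ν.restrict E₀ᶜ] 0 := by
  classical
  haveI : CompleteSpace H := hclosed.completeSpace_coe
  have hind : ∀ E, MeasurableSet E → MulStab ν H (E.indicator fun _ => (1:ℝ)) :=
    mulStab_indicator hpi hgen hclosed (fun E hE f hf => hinv E hE f hf)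
  have hsimple : ∀ s : SimpleFunc α ℝ, MulStab ν H ⇑s := mulStab_simple hind
  -- a positive L² weight
  obtain ⟨g0, hg0pos, hg0meas, hg0int⟩ := exists_pos_lintegral_lt_of_sigmaFinite ν one_ne_zero
  set w : α → ℝ := fun a => Real.sqrt (g0 a) with hwdef
  have hwmeas : Measurable w :=
    Real.continuous_sqrt.measurable.comp (measurable_coe_nnreal_real.comp hg0meas)
  have hwpos : ∀ a, 0 < w a := fun a => Real.sqrt_pos.mpr (by exact_mod_cast hg0pos a)
  have hwmem : MemLp w 2 ν := by
    rw [memLp_two_iff_integrable_sq hwmeas.aestronglyMeasurable]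
    have hsq : (fun a => w a ^ 2) = fun a => ((g0 a : ℝ)) := by
      funext a; exact Real.sq_sqrt (g0 a).coe_nonneg
    rw [hsq]
    refine ⟨(measurable_coe_nnreal_real.comp hg0meas).aestronglyMeasurable, ?_⟩
    show (∫⁻ a, (‖(g0 a : ℝ)‖₊ : ℝ≥0∞) ∂ν) < ∞
    calc ∫⁻ a, (‖(g0 a : ℝ)‖₊ : ℝ≥0∞) ∂ν = ∫⁻ a, (g0 a : ℝ≥0∞) ∂ν := by
          congr 1; funext a
          rw [Real.nnnorm_of_nonneg (g0 a).coe_nonneg]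
          rfl
      _ < ∞ := hg0int.trans_le le_top
  set W : Lp ℝ 2 ν := hwmem.toLp w with hWdef
  set h : Lp ℝ 2 ν := (Submodule.orthogonalProjection H W : Lp ℝ 2 ν) with hhdef
  have hhH : h ∈ H := (Submodule.orthogonalProjection H W).2
  have horthmem : W - h ∈ Hᗮ := Submodule.sub_starProjection_mem_orthogonal (K := H) W
  -- key vanishing lemma
  have hkey : ∀ f' : Lp ℝ 2 ν, f' ∈ H →
      (fun a => ((W : α → ℝ) a - (h : α → ℝ) a) * (f' : α → ℝ) a) =ᵐ[ν] 0 := by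
    intro f' hf'
    have hInt : Integrable (fun a => ((W : α → ℝ) a - (h : α → ℝ) a) * (f' : α → ℝ) a) ν := by
      have hI := L2.integrable_inner (𝕜 := ℝ) (W - h) f'
      refine hI.congr ?_
      filter_upwards [Lp.coeFn_sub W h] with a ha
      rw [RCLike.inner_apply, RCLike.conj_to_real, ha, Pi.sub_apply, mul_comm]
    refine hInt.ae_eq_zero_of_forall_setIntegral_eq_zero ?_
    intro s hs hμs
    obtain ⟨g, hg, hge⟩ := hind s hs f' hf'
    have hzero0 : (inner ℝ g (W - h) : ℝ) = 0 :=
      (Submodule.mem_orthogonal H (W - h)).mp horthmem g hg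
    have hzero : (inner ℝ (W - h) g : ℝ) = 0 := by rw [real_inner_comm]; exact hzero0
    rw [L2.inner_def] at hzero
    have heq1 : ∫ a, (inner ℝ (((W - h : Lp ℝ 2 ν) : α → ℝ) a) (((g : Lp ℝ 2 ν) : α → ℝ) a) : ℝ) ∂ν
        = ∫ a in s, ((W : α → ℝ) a - (h : α → ℝ) a) * (f' : α → ℝ) a ∂ν := by
      rw [← integral_indicator hs]
      refine integral_congr_ae ?_
      filter_upwards [Lp.coeFn_sub W h, hge] with a h1 h2
      rw [RCLike.inner_apply, RCLike.conj_to_real, h1, Pi.sub_apply, h2, mul_comm]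
      by_cases hmem : a ∈ s
      · rw [Set.indicator_of_mem hmem, Set.indicator_of_mem hmem]
        simp only [one_mul]
      · rw [Set.indicator_of_notMem hmem, Set.indicator_of_notMem hmem]
        simp
    rw [heq1] at hzero
    exact hzero
  -- the candidate set
  have hhmeas : StronglyMeasurable (h : α → ℝ) := Lp.stronglyMeasurable h
  set E₀ : Set α := {a | (h : α → ℝ) a ≠ 0} with hE₀def
  have hE₀meas : MeasurableSet E₀ :=
    (hhmeas.measurable (measurableSet_singleton 0)).compl
  have hWw : (W : α → ℝ) =ᵐ[ν] w := hwmem.coeFn_toLp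
  have hwh : (fun a => (w a - (h : α → ℝ) a) * (h : α → ℝ) a) =ᵐ[ν] 0 := by
    filter_upwards [hkey h hhH, hWw] with a h1 h2
    rw [← h2]; exact h1
  refine ⟨E₀, hE₀meas, fun f => ⟨?_, ?_⟩⟩
  · -- forward
    intro hf
    have hgoal : ∀ᵐ a ∂ν, a ∈ E₀ᶜ → (f : α → ℝ) a = 0 := ?_
    · exact ((ae_restrict_iff' hE₀meas.compl).mpr hgoal).mono fun a ha => ha
    filter_upwards [hkey f hf, hWw] with a h1 h2 hmem
    have hh0 : (h : α → ℝ) a = 0 := by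
      by_contra hc; exact hmem hc
    rw [Pi.zero_apply] at h1
    rw [hh0, sub_zero, h2] at h1
    rcases mul_eq_zero.mp h1 with h3 | h3
    · exact absurd h3 (ne_of_gt (hwpos a))
    · exact h3
  · -- reverse
    intro hf0
    have hf0' : ∀ᵐ a ∂ν, a ∈ E₀ᶜ → (f : α → ℝ) a = 0 :=
      (ae_restrict_iff' hE₀meas.compl).mp (hf0.mono fun a ha => ha)
    have hE₀w : ∀ᵐ a ∂ν, a ∈ E₀ → (h : α → ℝ) a = w a := by
      filter_upwards [hwh] with a h1 hmem
      rw [Pi.zero_apply] at h1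
      rcases mul_eq_zero.mp h1 with h3 | h3
      · linarith [sub_eq_zero.mp h3]
      · exact absurd h3 hmem
    set v : α → ℝ := E₀.indicator (fun x => (f : α → ℝ) x / w x) with hvdef
    have hvmeas : Measurable v :=
      (((Lp.stronglyMeasurable f).measurable).div hwmeas).indicator hE₀meas
    set sn : ℕ → SimpleFunc α ℝ :=
      fun n => SimpleFunc.approxOn v hvmeas Set.univ 0 (Set.mem_univ 0) n with hsndef
    have hgex : ∀ n, ∃ g ∈ H, (g : α → ℝ) =ᵐ[ν] fun a => sn n a * (h : α → ℝ) a :=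
      fun n => hsimple (sn n) h hhH
    choose g hgH hge using hgex
    have hsnb : ∀ n a, ‖sn n a‖ ≤ ‖v a‖ + ‖v a‖ :=
      fun n a => SimpleFunc.norm_approxOn_zero_le hvmeas (Set.mem_univ 0) a n
    have hsnt : ∀ a, Tendsto (fun n => sn n a) atTop (𝓝 (v a)) :=
      fun a => SimpleFunc.tendsto_approxOn hvmeas (Set.mem_univ 0) (by simp)
    have hbmem : MemLp (fun a => 2 * ‖(f : α → ℝ) a‖) 2 ν := (Lp.memLp f).norm.const_mul 2
    have htends : Tendsto g atTop (𝓝 f) := by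
      refine aux_tendsto_L2 g f (fun a => 2 * ‖(f : α → ℝ) a‖) hbmem ?_ ?_
      · intro n
        filter_upwards [hge n, hE₀w, hf0'] with a h1 h2 h3
        rw [h1]
        by_cases hmem : a ∈ E₀
        · have hha : (h : α → ℝ) a = w a := h2 hmem
          have hva : ‖v a‖ * ‖(h : α → ℝ) a‖ = ‖(f : α → ℝ) a‖ := by
            rw [hvdef]
            simp only [Set.indicator_of_mem hmem]
            rw [hha, norm_div, div_mul_cancel₀ _ (norm_ne_zero_iff.mpr (ne_of_gt (hwpos a)))]
          calc ‖sn n a * (h : α → ℝ) a‖ = ‖sn n a‖ * ‖(h : α → ℝ) a‖ := norm_mul _ _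
            _ ≤ (‖v a‖ + ‖v a‖) * ‖(h : α → ℝ) a‖ :=
                mul_le_mul_of_nonneg_right (hsnb n a) (norm_nonneg _)
            _ = 2 * (‖v a‖ * ‖(h : α → ℝ) a‖) := by ring
            _ = 2 * ‖(f : α → ℝ) a‖ := by rw [hva]
        · have hha : (h : α → ℝ) a = 0 := by
            by_contra hc; exact hmem hc
          rw [hha, mul_zero, norm_zero]
          positivity
      · have hall : ∀ᵐ a ∂ν, ∀ n, (g n : α → ℝ) a = sn n a * (h : α → ℝ) a :=
          ae_all_iff.mpr hge
        filter_upwards [hall, hE₀w, hf0'] with a ha h2 h3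
        have hta : Tendsto (fun n => sn n a * (h : α → ℝ) a) atTop (𝓝 (v a * (h : α → ℝ) a)) :=
          (hsnt a).mul_const _
        have hfin : v a * (h : α → ℝ) a = (f : α → ℝ) a := by
          by_cases hmem : a ∈ E₀
          · rw [hvdef]
            simp only [Set.indicator_of_mem hmem]
            rw [h2 hmem, div_mul_cancel₀]
            exact ne_of_gt (hwpos a)
          · have hha : (h : α → ℝ) a = 0 := by
              by_contra hc; exact hmem hc
            rw [hha, mul_zero, h3 hmem]
        rw [← hfin]
        refine hta.congr fun n => ?_
        rw [ha n]
    exact hclosed.mem_of_tendsto htends (Eventually.of_forall hgH)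
end

section
/- Let Γ ⊆ Ω × [0,∞) be a random set such that for each ω the section Γ(ω) contains 0, is closed, and Γ is coalescent: for all u ≥ 0 and all s, if s ∈ Γ(ω) ∩ [u,∞) then Γ(ω) ∩ [s,∞) = (u + Γ(Δ_u ω)) ∩ [s,∞), where Δ_u are shifts satisfying Δ_u∘Δ_v = Δ_{u+v}. For real s ≤ t define g_{s,t}(ω) := s + sup(Γ(Δ_s ω) ∩ [0, t−s]) (sup ∅ := 0). Then for all real s₁ ≤ s₂ ≤ t₂ ≤ t₁ and all ω: if g_{s₁,t₁}(ω) ∈ [s₂,t₂] and the supremum defining g_{s₁,t₁}(ω) is attained, then g_{s₂,t₂}(ω) = g_{s₁,t₁}(ω). -/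
/-- The last point of `Γ(Δ_s ω)` in `[0, t−s]`, shifted back:
`g_{s,t}(ω) = s + sup(Γ(Δ_s ω) ∩ [0, t−s])` (with `sup ∅ = 0`, which is the
convention of `sSup` on `ℝ`). -/
noncomputable def lastPoint {Ω : Type*} (Δ : ℝ → Ω → Ω) (Γ : Ω → Set ℝ)
    (s t : ℝ) (ω : Ω) : ℝ :=
  s + sSup (Γ (Δ s ω) ∩ Set.Icc 0 (t - s))

/-- Nesting property of the last-exit points of a coalescent closed random set
containing `0`: if `g_{s₁,t₁}(ω) ∈ [s₂,t₂]` for `s₁ ≤ s₂ ≤ t₂ ≤ t₁` and the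
supremum defining `g_{s₁,t₁}(ω)` is attained, then
`g_{s₂,t₂}(ω) = g_{s₁,t₁}(ω)`. -/
theorem stmt_18 {Ω : Type*} (Δ : ℝ → Ω → Ω)
    (hgrp : ∀ u v : ℝ, Δ u ∘ Δ v = Δ (u + v))
    (Γ : Ω → Set ℝ)
    (h0 : ∀ ω, (0 : ℝ) ∈ Γ ω)
    (hclosed : ∀ ω, IsClosed (Γ ω))
    (hpos : ∀ ω, Γ ω ⊆ Set.Ici (0 : ℝ))
    (hcoal : ∀ ω, ∀ u : ℝ, 0 ≤ u → ∀ s ∈ Γ ω, u ≤ s →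
      Γ ω ∩ Set.Ici s = ((fun r => u + r) '' Γ (Δ u ω)) ∩ Set.Ici s) :
    ∀ (ω : Ω) (s₁ s₂ t₂ t₁ : ℝ), s₁ ≤ s₂ → s₂ ≤ t₂ → t₂ ≤ t₁ →
      lastPoint Δ Γ s₁ t₁ ω ∈ Set.Icc s₂ t₂ →
      lastPoint Δ Γ s₁ t₁ ω - s₁ ∈ Γ (Δ s₁ ω) →
      lastPoint Δ Γ s₂ t₂ ω = lastPoint Δ Γ s₁ t₁ ω := by
  intro ω s₁ s₂ t₂ t₁ h12 h2t ht21 hmem hatt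
  set m := sSup (Γ (Δ s₁ ω) ∩ Set.Icc 0 (t₁ - s₁)) with hm
  have hg : lastPoint Δ Γ s₁ t₁ ω = s₁ + m := rfl
  rw [hg] at hmem
  have hatt' : m ∈ Γ (Δ s₁ ω) := by
    have : s₁ + m - s₁ = m := by ring
    rwa [hg, this] at hatt
  have hs2 : s₂ ≤ s₁ + m := hmem.1
  have ht2 : s₁ + m ≤ t₂ := hmem.2
  have hu : (0:ℝ) ≤ s₂ - s₁ := by linarith
  have hum : s₂ - s₁ ≤ m := by linarith
  have hshift : Δ (s₂ - s₁) (Δ s₁ ω) = Δ s₂ ω := by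
    have := congrFun (hgrp (s₂ - s₁) s₁) ω
    simpa using this
  have hcoal' := hcoal (Δ s₁ ω) (s₂ - s₁) hu m hatt' hum
  rw [hshift] at hcoal'
  have hbdd : BddAbove (Γ (Δ s₁ ω) ∩ Set.Icc 0 (t₁ - s₁)) :=
    ⟨t₁ - s₁, fun x hx => hx.2.2⟩
  have hgreat : IsGreatest (Γ (Δ s₂ ω) ∩ Set.Icc 0 (t₂ - s₂)) (m - (s₂ - s₁)) := by
    constructor
    · have hmL : m ∈ Γ (Δ s₁ ω) ∩ Set.Ici m := ⟨hatt', le_refl m⟩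
      rw [hcoal'] at hmL
      obtain ⟨⟨r, hr, hrm⟩, -⟩ := hmL
      have hrm' : s₂ - s₁ + r = m := hrm
      have : r = m - (s₂ - s₁) := by linarith
      subst this
      exact ⟨hr, by linarith, by linarith⟩
    · intro x hx
      rcases le_or_gt x (m - (s₂ - s₁)) with h | h
      · exact h
      · exfalso
        have hxm : (s₂ - s₁) + x ∈ ((fun r => (s₂ - s₁) + r) '' Γ (Δ s₂ ω)) ∩ Set.Ici m :=
          ⟨⟨x, hx.1, rfl⟩, by simp only [Set.mem_Ici]; linarith⟩
        rw [← hcoal'] at hxm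
        have hxS : (s₂ - s₁) + x ∈ Γ (Δ s₁ ω) ∩ Set.Icc 0 (t₁ - s₁) :=
          ⟨hxm.1, by linarith [hx.2.1], by linarith [hx.2.2]⟩
        have := le_csSup hbdd hxS
        rw [← hm] at this
        linarith
  have : sSup (Γ (Δ s₂ ω) ∩ Set.Icc 0 (t₂ - s₂)) = m - (s₂ - s₁) := hgreat.csSup_eq
  show s₂ + sSup (Γ (Δ s₂ ω) ∩ Set.Icc 0 (t₂ - s₂)) = lastPoint Δ Γ s₁ t₁ ω
  rw [this, hg]; ring
end
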